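/- For natural number n and complex a, b, c, d with c not of the form 0,−1,…, and with c − n, d, 1+a−c not nonpositive integers: the terminating series satisfies ₃F₂(−n, a, b; c−n, d; 1) = ((1+a−c)_n / (1−c)_n) · ₃F₂(−n, a, d−b; 1+a−c; d; 1), i.e. ∑_{k=0}^{n} (−n)_k (a)_k (b)_k / ((c−n)_k (d)_k k!) = ((1+a−c)_n / (1−c)_n) · ∑_{k=0}^{n} (−n)_k (a)_k (d−b)_k / ((1+a−c)_k (d)_k k!). -/

import Mathlib

/-!
Expand `(d - b)_k / (d)_k` on the right-hand side by Chu–Vandermonde,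
`∑_j (-1)^j C(k, j) (b)_j / (d)_j`, and interchange the two sums. For fixed `j` the inner sum
over `k ≥ j`, shifted by `k = j + m`, is again a Chu–Vandermonde sum
`₂F₁(-(n-j), a+j; 1+a-c+j; 1) = (1-c)_{n-j} / (1+a-c+j)_{n-j}`, and the Pochhammer
prefactors collapse to `1 / (c-n)_j` by the reflection `(x)_k = (-1)^k (1-x-k)_k`.
-/

open Complex Finset

/-- Pochhammer symbol `(x)_k = x (x+1) ⋯ (x+k-1)`. -/
noncomputable def poch (x : ℂ) (k : ℕ) : ℂ := ∏ i ∈ Finset.range k, (x + i)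

/-- Beta function `B(x,y) = Γ(x) Γ(y) / Γ(x+y)`. -/
noncomputable def cBeta (x y : ℂ) : ℂ :=
  Complex.Gamma x * Complex.Gamma y / Complex.Gamma (x + y)

lemma poch_succ (x : ℂ) (k : ℕ) : poch x (k + 1) = poch x k * (x + k) :=
  prod_range_succ _ _

lemma poch_add (x : ℂ) (j m : ℕ) : poch x (j + m) = poch x j * poch (x + j) m := by
  simp only [poch, prod_range_add, Nat.cast_add, add_assoc]

lemma poch_ne_zero {x : ℂ} (hx : ∀ i : ℕ, x ≠ -i) (k : ℕ) : poch x k ≠ 0 :=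
  prod_ne_zero_iff.mpr fun i _ h => hx i (eq_neg_of_add_eq_zero_left h)

lemma poch_eq_neg_one_pow_mul (x : ℂ) (k : ℕ) : poch x k = (-1) ^ k * poch (1 - x - k) k := by
  have hterm : ∀ i ∈ range k, x + ((k - 1 - i : ℕ) : ℂ) = -1 * (1 - x - k + i) := by
    intro i hi
    rw [Nat.sub_sub, Nat.cast_sub (by simp at hi; omega)]
    push_cast
    ring
  rw [poch, ← prod_range_reflect, prod_congr rfl hterm, prod_mul_distrib, prod_const, card_range,
    poch]

lemma poch_neg_natCast (k j : ℕ) : poch (-(k : ℂ)) j = (-1) ^ j * k.descFactorial j := by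
  have hterm : ∀ i ∈ range j, -(k : ℂ) + i = -1 * (k - i) := fun _ _ => by ring
  rw [← descPochhammer_eval_eq_descFactorial, descPochhammer_eval_eq_prod_range, poch,
    prod_congr rfl hterm, prod_mul_distrib, prod_const, card_range]

lemma poch_neg_natCast_div_factorial (k j : ℕ) :
    poch (-(k : ℂ)) j / j.factorial = (-1) ^ j * k.choose j := by
  rw [poch_neg_natCast, Nat.descFactorial_eq_factorial_mul_choose, Nat.cast_mul, mul_div_assoc,
    mul_div_cancel_left₀ _ (Nat.cast_ne_zero.mpr j.factorial_ne_zero)]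

lemma poch_one_sub_eq {n j : ℕ} (c : ℂ) (hj : j ≤ n) :
    poch (1 - c) n = (-1) ^ j * poch (1 - c) (n - j) * poch (c - n) j := by
  obtain ⟨m, rfl⟩ := Nat.exists_eq_add_of_le' hj
  rw [Nat.add_sub_cancel, poch_add, poch_eq_neg_one_pow_mul (1 - c + m)]
  push_cast
  ring_nf

lemma poch_ne_zero_of_le {x : ℂ} {i m : ℕ} (h : poch x m ≠ 0) (hi : i ≤ m) :
    poch x i ≠ 0 := by
  obtain ⟨l, rfl⟩ := Nat.exists_eq_add_of_le hi
  exact left_ne_zero_of_mul (poch_add x i l ▸ h)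

lemma poch_add_eq_sum_choose (x y : ℂ) (k : ℕ) :
    poch (x + y) k = ∑ j ∈ range (k + 1), (k.choose j : ℂ) * (poch x j * poch y (k - j)) := by
  induction k with
  | zero => simp [poch]
  | succ k ih =>
    rw [sum_choose_succ_mul (fun i j => poch x i * poch y j) k, poch_succ, ih, sum_mul,
      ← sum_add_distrib]
    refine sum_congr rfl fun j hj => ?_
    obtain ⟨m, rfl⟩ := Nat.exists_eq_add_of_le (Nat.lt_succ_iff.mp (mem_range.mp hj))
    rw [Nat.add_sub_cancel_left, show j + m + 1 - j = m + 1 by omega, poch_succ, poch_succ]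
    push_cast
    ring

lemma poch_sub_div_poch_eq_sum {b d : ℂ} {k : ℕ} (hd : poch d k ≠ 0) :
    poch (d - b) k / poch d k =
      ∑ j ∈ range (k + 1), (-1) ^ j * k.choose j * (poch b j / poch d j) := by
  -- `(d - b)_k = (-1)^k (b + (1 - d - k))_k`, expanded by Vandermonde; reflecting back,
  -- `(1 - d - k)_{k-j} = (-1)^{k-j} (d + j)_{k-j}` cancels against `(d)_k = (d)_j (d + j)_{k-j}`.
  rw [div_eq_iff hd, sum_mul, poch_eq_neg_one_pow_mul,
    show 1 - (d - b) - k = b + (1 - d - k) by ring, poch_add_eq_sum_choose, mul_sum]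
  refine sum_congr rfl fun j hj => ?_
  obtain ⟨m, rfl⟩ := Nat.exists_eq_add_of_le (Nat.lt_succ_iff.mp (mem_range.mp hj))
  have hdj : poch d j ≠ 0 := poch_ne_zero_of_le hd (Nat.le_add_right j m)
  rw [Nat.add_sub_cancel_left, poch_eq_neg_one_pow_mul (1 - d - _) m, poch_add d j m,
    show (1 : ℂ) - (1 - d - ((j + m : ℕ) : ℂ)) - m = d + j by push_cast; ring]
  have hsq : ((-1 : ℂ) ^ m) ^ 2 = 1 := by rw [← pow_mul, pow_mul', neg_one_sq, one_pow]
  field_simp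
  linear_combination (-1 : ℂ) ^ j * ((j + m).choose j) * poch b j * poch (d + j) m * hsq

theorem chu_vandermonde {b d : ℂ} {k : ℕ} (hd : poch d k ≠ 0) :
    ∑ j ∈ range (k + 1), poch (-(k : ℂ)) j * poch b j / (poch d j * j.factorial) =
      poch (d - b) k / poch d k := by
  rw [poch_sub_div_poch_eq_sum hd]
  refine sum_congr rfl fun j _ => ?_
  rw [← poch_neg_natCast_div_factorial]
  ring

lemma sum_Ico_choose_mul_poch_div {n j : ℕ} {a e : ℂ} (hj : j ≤ n) (he : poch e n ≠ 0) :
    ∑ k ∈ Ico j (n + 1),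
        (k.choose j : ℂ) * (poch (-(n : ℂ)) k * poch a k / (poch e k * k.factorial)) =
      poch (-(n : ℂ)) j * poch a j / (poch e j * j.factorial) *
        (poch (e - a) (n - j) / poch (e + j) (n - j)) := by
  obtain ⟨m, rfl⟩ := Nat.exists_eq_add_of_le hj
  rw [poch_add] at he
  obtain ⟨hpej, hej⟩ := mul_ne_zero_iff.mp he
  rw [sum_Ico_eq_sum_range, show j + m + 1 - j = m + 1 by omega, Nat.add_sub_cancel_left,
    show e - a = e + j - (a + j) by ring, ← chu_vandermonde hej, mul_sum]
  refine sum_congr rfl fun i hi => ?_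
  have hei : poch (e + j) i ≠ 0 := poch_ne_zero_of_le hej (Nat.lt_succ_iff.mp (mem_range.mp hi))
  have hchoose : ((j + i).choose j : ℂ) ≠ 0 :=
    Nat.cast_ne_zero.mpr (Nat.choose_pos (Nat.le_add_right j i)).ne'
  have hfact : ((j + i).choose j : ℂ) * i.factorial * j.factorial = (j + i).factorial := by
    rw [add_comm j i]
    exact_mod_cast Nat.add_choose_mul_factorial_mul_factorial i j
  rw [poch_add _ j i, poch_add a j i, poch_add e j i,
    show -((j + m : ℕ) : ℂ) + j = -(m : ℂ) by push_cast; ring, ← hfact]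
  field_simp

lemma sum_Ico_choose_mul_poch_div_eq_poch_sub {n j : ℕ} {a c : ℂ} (hj : j ≤ n)
    (hac : poch (1 + a - c) n ≠ 0) (hc : poch (1 - c) n ≠ 0) :
    ∑ k ∈ Ico j (n + 1), (k.choose j : ℂ) *
        (poch (-(n : ℂ)) k * poch a k / (poch (1 + a - c) k * k.factorial)) =
      poch (1 - c) n / poch (1 + a - c) n *
        (poch (-(n : ℂ)) j * poch a j / ((-1) ^ j * poch (c - n) j * j.factorial)) := by
  rw [sum_Ico_choose_mul_poch_div hj hac, show 1 + a - c - a = 1 - c by ring]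
  have hsplit := poch_add (1 + a - c) j (n - j)
  rw [Nat.add_sub_cancel' hj] at hsplit
  rw [hsplit] at hac ⊢
  rw [poch_one_sub_eq c hj] at hc ⊢
  obtain ⟨hcm, hcj⟩ := mul_ne_zero_iff.mp hc
  replace hcm := right_ne_zero_of_mul hcm
  obtain ⟨hej, hejm⟩ := mul_ne_zero_iff.mp hac
  field_simp

theorem terminating_transform_85_general (n : ℕ) (a b c d : ℂ)
    (hcn : ∀ k : ℕ, c - n ≠ -(k : ℂ))
    (hd : ∀ k : ℕ, d ≠ -(k : ℂ)) (hac : ∀ k : ℕ, 1 + a - c ≠ -(k : ℂ)) :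
    ∑ k ∈ Finset.range (n + 1),
        poch (-(n : ℂ)) k * poch a k * poch b k /
          (poch (c - n) k * poch d k * (Nat.factorial k : ℂ)) =
      (poch (1 + a - c) n / poch (1 - c) n) *
        ∑ k ∈ Finset.range (n + 1),
          poch (-(n : ℂ)) k * poch a k * poch (d - b) k /
            (poch (1 + a - c) k * poch d k * (Nat.factorial k : ℂ)) := by
  have hpe : poch (1 + a - c) n ≠ 0 := poch_ne_zero hac n
  have hpc : poch (1 - c) n ≠ 0 := by
    rw [poch_one_sub_eq c le_rfl, Nat.sub_self]
    exact mul_ne_zero (by simp [poch]) (poch_ne_zero hcn n)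
  have hpd : ∀ k, poch d k ≠ 0 := poch_ne_zero hd
  calc _ = poch (1 + a - c) n / poch (1 - c) n * ∑ j ∈ range (n + 1),
          (-1) ^ j * (poch b j / poch d j) * ∑ k ∈ Ico j (n + 1), (k.choose j : ℂ) *
            (poch (-(n : ℂ)) k * poch a k / (poch (1 + a - c) k * k.factorial)) := by
        rw [mul_sum]
        refine sum_congr rfl fun j hj => ?_
        rw [sum_Ico_choose_mul_poch_div_eq_poch_sub (Nat.lt_succ_iff.mp (mem_range.mp hj)) hpe hpc]
        have hcj : poch (c - n) j ≠ 0 := poch_ne_zero hcn j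
        field_simp [hpd j]
    _ = poch (1 + a - c) n / poch (1 - c) n * ∑ k ∈ range (n + 1),
          poch (-(n : ℂ)) k * poch a k / (poch (1 + a - c) k * k.factorial) *
            ∑ j ∈ range (k + 1), (-1) ^ j * k.choose j * (poch b j / poch d j) := by
        simp only [range_eq_Ico, mul_sum, ← sum_Ico_Ico_comm]
        exact sum_congr rfl fun j _ => sum_congr rfl fun k _ => by ring
    _ = _ := by
        simp only [← poch_sub_div_poch_eq_sum (hpd _), mul_sum]
        exact sum_congr rfl fun k _ => by ring

theorem terminating_transform_85 (n : ℕ) (a b c d : ℂ)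
    (hc : ∀ k : ℕ, c ≠ -(k : ℂ)) (hcn : ∀ k : ℕ, c - n ≠ -(k : ℂ))
    (hd : ∀ k : ℕ, d ≠ -(k : ℂ)) (hac : ∀ k : ℕ, 1 + a - c ≠ -(k : ℂ)) :
    ∑ k ∈ Finset.range (n + 1),
        poch (-(n : ℂ)) k * poch a k * poch b k /
          (poch (c - n) k * poch d k * (Nat.factorial k : ℂ)) =
      (poch (1 + a - c) n / poch (1 - c) n) *
        ∑ k ∈ Finset.range (n + 1),
          poch (-(n : ℂ)) k * poch a k * poch (d - b) k /
            (poch (1 + a - c) k * poch d k * (Nat.factorial k : ℂ)) :=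
  terminating_transform_85_general n a b c d hcn hd hac
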